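/- The bivariate quadratic polynomial p(x_1, x_2) = 8x_1² − 4x_1 + 2x_2² − 2x_2 + 3 + 8x_1x_2 satisfies p(x) ≥ 0 for all x ∈ ℝ² (indeed p(x) = ((√5+1)/2 − 2x_1 − x_2)² + ((√5−1)/2 + 2x_1 + x_2)²), but p cannot be written as p = s + q where s is a separable polynomial with s(x) ≥ 0 for all x ∈ ℝ² and q is a quadratic form (homogeneous polynomial of degree 2) with q(x) ≥ 0 for all x ∈ ℝ². -/

import Mathlib

open MvPolynomial

/-- The bivariate quadratic polynomial `8x₁² − 4x₁ + 2x₂² − 2x₂ + 3 + 8x₁x₂`. -/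
noncomputable def p4 : MvPolynomial (Fin 2) ℝ :=
  8 * X 0 ^ 2 - 4 * X 0 + 2 * X 1 ^ 2 - 2 * X 1 + C 3 + 8 * X 0 * X 1

/-!
Write `q u v = a u² + b u v + c v²`. A separable `s` contributes nothing to the mixed second
difference, so `b = 8`, and along the axes `s(u,0) = (8-a)u² - 4u + 3`, `s(0,v) = (2-c)v² - 2v + 3`.
Nonnegativity of these two and of `q` gives, through their discriminants, `a ≤ 20/3`, `c ≤ 5/3`
and `16 ≤ a c` with `a, c ≥ 0`, which is impossible.
-/

theorem MvPolynomial.eval_aeval_X {R σ : Type*} [CommSemiring R] (x : σ → R) (i : σ)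
    (f : Polynomial R) : eval x (Polynomial.aeval (X i) f) = f.eval (x i) := by
  simpa [Polynomial.coe_aeval_eq_eval] using (Polynomial.aeval_algHom_apply (aeval x) (X i) f).symm

theorem MvPolynomial.IsHomogeneous.eval_smul {R σ : Type*} [CommSemiring R] [Fintype σ]
    {φ : MvPolynomial σ R} {n : ℕ} (hφ : φ.IsHomogeneous n) (c : R) (x : σ → R) :
    eval (c • x) φ = c ^ n * eval x φ := by
  rw [eval_eq', eval_eq', Finset.mul_sum]
  refine Finset.sum_congr rfl fun d hd => ?_
  have hdeg : ∑ i, d i = n := by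
    simpa [Finsupp.weight_apply, Finsupp.sum_fintype] using hφ (mem_support_iff.mp hd)
  simp only [Pi.smul_apply, smul_eq_mul, mul_pow, Finset.prod_mul_distrib,
    Finset.prod_pow_eq_pow_sum, hdeg]
  ring

theorem eq_mixed_difference_of_eq_separable_add_homogeneous {f g : ℝ → ℝ} {P Q : ℝ → ℝ → ℝ}
    (hQ : ∀ t u v, Q (t * u) (t * v) = t ^ 2 * Q u v) (hP : ∀ u v, P u v = f u + g v + Q u v)
    (u v : ℝ) : Q u v = Q 1 0 * u ^ 2 + (P u v - P u 0 - P 0 v + P 0 0) + Q 0 1 * v ^ 2 := by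
  have hu : Q u 0 = u ^ 2 * Q 1 0 := by simpa using hQ u 1 0
  have hv : Q 0 v = v ^ 2 * Q 0 1 := by simpa using hQ v 0 1
  have h0 : Q 0 0 = 0 := by simpa using hQ 0 0 0
  linarith [hP u v, hP u 0, hP 0 v, hP 0 0]

theorem false_of_eq_nonneg_separable_add_nonneg_form {f g : ℝ → ℝ} {Q : ℝ → ℝ → ℝ}
    (hQ : ∀ t u v, Q (t * u) (t * v) = t ^ 2 * Q u v)
    (hfg : ∀ u v, 0 ≤ f u + g v) (hQ_nonneg : ∀ u v, 0 ≤ Q u v)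
    (hP : ∀ u v, 8 * u ^ 2 - 4 * u + 2 * v ^ 2 - 2 * v + 3 + 8 * u * v = f u + g v + Q u v) :
    False := by
  set a := Q 1 0
  set c := Q 0 1
  have hform : ∀ u v, Q u v = a * u ^ 2 + 8 * u * v + c * v ^ 2 := fun u v => by
    rw [eq_mixed_difference_of_eq_separable_add_homogeneous hQ hP u v]; ring
  have hq : discrim a 8 c ≤ 0 := discrim_le_zero fun u => by
    have := hQ_nonneg u 1; rw [hform] at this; linarith
  have hs₀ : discrim (8 - a) (-4) 3 ≤ 0 := discrim_le_zero fun u => by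
    have := hfg u 0; rw [← sub_eq_of_eq_add (hP u 0), hform] at this; linarith
  have hs₁ : discrim (2 - c) (-2) 3 ≤ 0 := discrim_le_zero fun v => by
    have := hfg 0 v; rw [← sub_eq_of_eq_add (hP 0 v), hform] at this; linarith
  have ha : 0 ≤ a := hQ_nonneg 1 0
  have hc : 0 ≤ c := hQ_nonneg 0 1
  unfold discrim at hq hs₀ hs₁
  nlinarith

theorem nonneg_but_not_nonneg_sep_plus_nonneg_quad_form :
    (∀ x : Fin 2 → ℝ,
      eval x p4 =
        ((Real.sqrt 5 + 1) / 2 - 2 * x 0 - x 1) ^ 2 +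
        ((Real.sqrt 5 - 1) / 2 + 2 * x 0 + x 1) ^ 2) ∧
    (∀ x : Fin 2 → ℝ, 0 ≤ eval x p4) ∧
    ¬ ∃ (s : Fin 2 → Polynomial ℝ) (q : MvPolynomial (Fin 2) ℝ),
        q.IsHomogeneous 2 ∧
        (∀ x : Fin 2 → ℝ, 0 ≤ eval x (∑ i, Polynomial.aeval (MvPolynomial.X i) (s i))) ∧
        (∀ x : Fin 2 → ℝ, 0 ≤ eval x q) ∧
        p4 = (∑ i, Polynomial.aeval (MvPolynomial.X i) (s i)) + q := by
  have hsos : ∀ x : Fin 2 → ℝ, eval x p4 =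
      ((Real.sqrt 5 + 1) / 2 - 2 * x 0 - x 1) ^ 2 + ((Real.sqrt 5 - 1) / 2 + 2 * x 0 + x 1) ^ 2 := by
    intro x
    simp only [p4, map_add, map_sub, map_mul, map_pow, eval_X, map_ofNat]
    linear_combination (-1 / 2 : ℝ) * Real.sq_sqrt (show (0 : ℝ) ≤ 5 by norm_num)
  refine ⟨hsos, fun x => by rw [hsos x]; positivity, ?_⟩
  rintro ⟨s, q, hq, hs, hq_nonneg, hp⟩
  have hsep (x : Fin 2 → ℝ) :
      eval x (∑ i, Polynomial.aeval (X i) (s i)) = (s 0).eval (x 0) + (s 1).eval (x 1) := by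
    rw [Fin.sum_univ_two, map_add, eval_aeval_X, eval_aeval_X]
  refine false_of_eq_nonneg_separable_add_nonneg_form (f := (s 0).eval) (g := (s 1).eval)
    (Q := fun u v => eval ![u, v] q) (fun t u v => ?_) (fun u v => ?_) (fun u v => hq_nonneg _) (fun u v => ?_)
  · simpa using hq.eval_smul t ![u, v]
  · simpa only [hsep, Matrix.cons_val_zero, Matrix.cons_val_one] using hs ![u, v]
  · have := congrArg (eval ![u, v]) hp
    simp only [map_add, hsep] at this
    simpa [p4] using this
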